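/- Let A be an M×M real matrix with eᵀA = 0 such that J A H is invertible. Then the vector p_∞ = (I_M − H (J A H)^{-1} J A) e_M is the UNIQUE vector p ∈ ℝ^M satisfying both A p = 0 and eᵀ p = 1. -/

import Mathlib

open Matrix

/-- The all-but-last-row identity matrix `J` (size `(M-1) × M`). -/
noncomputable def J (M : ℕ) : Matrix (Fin (M - 1)) (Fin M) ℝ :=
  Matrix.of fun i j => if (i : ℕ) = (j : ℕ) then 1 else 0

/-- The matrix `H` (size `M × (M-1)`): identity on top, last row all `-1`. -/
noncomputable def H (M : ℕ) : Matrix (Fin M) (Fin (M - 1)) ℝ :=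
  Matrix.of fun i j => if (i : ℕ) = (j : ℕ) then 1 else if (i : ℕ) = M - 1 then -1 else 0

/-- The all-ones vector `e = (1,...,1)ᵀ`. -/
noncomputable def eVec (M : ℕ) : Fin M → ℝ := fun _ => 1

/-- The unit vector `e_M = (0,...,0,1)ᵀ`. -/
noncomputable def eM (M : ℕ) : Fin M → ℝ := fun i => if (i : ℕ) = M - 1 then 1 else 0

/-! `H * J = 1 - e_M eᵀ` is the projection onto `ker eᵀ` along `e_M`, so `H` and `J` identify
`ker eᵀ` with `ℝ^(M-1)`. Since `eᵀ A = 0`, `A` maps into `ker eᵀ`, so `A p = 0` is equivalent to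
`J A p = 0`; writing the points of the hyperplane `eᵀ p = 1` as `p = e_M + H q` turns this into
the invertible system `(J A H) q = -J A e_M`. -/

namespace Matrix

variable {m n K : Type*} [Fintype m] [Fintype n] [DecidableEq m] [CommRing K]
  {A : Matrix m m K} {J : Matrix n m K} {H : Matrix m n K} {e f : m → K}

lemma mulVec_mulVec_eq_self_of_dotProduct_eq_zero (hHJ : H * J = 1 - vecMulVec f e)
    {x : m → K} (hx : e ⬝ᵥ x = 0) : H *ᵥ (J *ᵥ x) = x := by
  rw [mulVec_mulVec, hHJ, sub_mulVec, one_mulVec, vecMulVec_mulVec, hx, MulOpposite.op_zero,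
    zero_smul, sub_zero]

lemma eq_zero_of_dotProduct_eq_zero_of_mulVec_eq_zero (hHJ : H * J = 1 - vecMulVec f e)
    {x : m → K} (hx : e ⬝ᵥ x = 0) (hJx : J *ᵥ x = 0) : x = 0 := by
  rw [← mulVec_mulVec_eq_self_of_dotProduct_eq_zero hHJ hx, hJx, mulVec_zero]

lemma mul_one_sub_mul_nonsing_inv_mul [DecidableEq n] (hB : IsUnit (J * A * H)) :
    J * A * (1 - H * (J * A * H)⁻¹ * (J * A)) = 0 := by
  simp only [Matrix.mul_sub, Matrix.mul_one, ← Matrix.mul_assoc]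
  rw [mul_nonsing_inv _ ((isUnit_iff_isUnit_det _).mp hB), Matrix.one_mul, sub_self]

theorem mulVec_eq_zero_and_dotProduct_eq_one_iff [DecidableEq n]
    (hHJ : H * J = 1 - vecMulVec f e) (hef : e ⬝ᵥ f = 1) (heH : e ᵥ* H = 0)
    (heA : e ᵥ* A = 0) (hB : IsUnit (J * A * H))
    (p : m → K) :
    (A *ᵥ p = 0 ∧ e ⬝ᵥ p = 1) ↔ p = (1 - H * (J * A * H)⁻¹ * (J * A)) *ᵥ f := by
  set p₀ := (1 - H * (J * A * H)⁻¹ * (J * A)) *ᵥ f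
  have he_p₀ : e ⬝ᵥ p₀ = 1 := by
    rw [dotProduct_mulVec, vecMul_sub, vecMul_one, Matrix.mul_assoc, ← vecMul_vecMul, heH,
      zero_vecMul, sub_zero, hef]
  have hA_p₀ : A *ᵥ p₀ = 0 := by
    refine eq_zero_of_dotProduct_eq_zero_of_mulVec_eq_zero hHJ ?_ ?_
    · rw [dotProduct_mulVec, heA, zero_dotProduct]
    · rw [mulVec_mulVec, mulVec_mulVec, mul_one_sub_mul_nonsing_inv_mul hB,
        zero_mulVec]
  refine ⟨fun ⟨hAp, hep⟩ => ?_, fun hp => hp ▸ ⟨hA_p₀, he_p₀⟩⟩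
  rw [← sub_eq_zero]
  have he_d : e ⬝ᵥ (p - p₀) = 0 := by rw [dotProduct_sub, hep, he_p₀, sub_self]
  have hA_d : A *ᵥ (p - p₀) = 0 := by rw [mulVec_sub, hAp, hA_p₀, sub_self]
  have hJ_d : J *ᵥ (p - p₀) = 0 := by
    apply mulVec_injective_of_isUnit hB
    calc (J * A * H) *ᵥ (J *ᵥ (p - p₀)) = J *ᵥ (A *ᵥ (H *ᵥ (J *ᵥ (p - p₀)))) := by
          simp only [mulVec_mulVec, Matrix.mul_assoc]
      _ = (J * A * H) *ᵥ 0 := by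
          rw [mulVec_mulVec_eq_self_of_dotProduct_eq_zero hHJ he_d, hA_d, mulVec_zero, mulVec_zero]
  exact eq_zero_of_dotProduct_eq_zero_of_mulVec_eq_zero hHJ he_d hJ_d

end Matrix

lemma eM_eq_single {M : ℕ} (hM : 0 < M) : eM M = Pi.single ⟨M - 1, by omega⟩ 1 := by
  ext i
  simp [eM, Pi.single_apply, Fin.ext_iff]

lemma eVec_dotProduct_eM {M : ℕ} (hM : 0 < M) : eVec M ⬝ᵥ eM M = 1 := by
  simp [eM_eq_single hM, eVec]

lemma H_apply (M : ℕ) (i : Fin M) (j : Fin (M - 1)) :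
    H M i j = (if (i : ℕ) = j then 1 else 0) - eM M i := by
  have := j.isLt
  unfold H eM
  split_ifs <;> simp_all; omega

lemma H_mul_J (M : ℕ) : H M * _root_.J M = 1 - vecMulVec (eM M) (eVec M) := by
  ext i j
  by_cases hj : (j : ℕ) < M - 1
  · rw [mul_apply, Finset.sum_eq_single ⟨j, hj⟩]
    · simp [H_apply, _root_.J, vecMulVec_apply, eVec, one_apply, Fin.ext_iff]
    · intro k _ hk
      simp [_root_.J, Fin.val_ne_of_ne hk]
    · simp
  · have hJ : ∀ k : Fin (M - 1), _root_.J M k j = 0 := fun k => by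
      simp [_root_.J]; omega
    have hj' : (j : ℕ) = M - 1 := by omega
    simp [mul_apply, hJ, vecMulVec_apply, eVec, eM, one_apply, Fin.ext_iff, hj']

lemma eVec_vecMul_H (M : ℕ) : eVec M ᵥ* H M = 0 := by
  ext j
  have hj : (j : ℕ) < M := by omega
  have hM : 0 < M := by omega
  have key : ∑ i : Fin M, (if (i : ℕ) = j then (1 : ℝ) else 0) = 1 := by
    simpa [Fin.ext_iff] using Finset.sum_ite_eq' Finset.univ (⟨j, hj⟩ : Fin M) (fun _ => (1 : ℝ))
  have := eVec_dotProduct_eM hM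
  simp only [vecMul, dotProduct, eVec, one_mul, H_apply, Finset.sum_sub_distrib, key] at this ⊢
  simp [this]

theorem stmt6 (M : ℕ) (hM : 2 ≤ M) (A : Matrix (Fin M) (Fin M) ℝ)
    (hA : eVec M ᵥ* A = 0)
    (hinv : IsUnit (J M * A * H M)) :
    ∀ p : Fin M → ℝ,
      (A *ᵥ p = 0 ∧ eVec M ⬝ᵥ p = 1) ↔
      p = (1 - H M * (J M * A * H M)⁻¹ * (J M * A)) *ᵥ eM M :=
  Matrix.mulVec_eq_zero_and_dotProduct_eq_one_iff (H_mul_J M) (eVec_dotProduct_eM (by omega))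
    (eVec_vecMul_H M) hA hinv
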